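/- Let ((Φ^{(i)})_{i∈I}, (p_i)_{i∈I}, ℙ) be a model (contraction ratios r_i ∈ (-1,1)\{0}, possibly negative) satisfying the strong separation condition, and assume that for every ω ∈ I^ℕ the pairwise distances between the sets f^{(ω_1)}_u(Y^{(σω)}), 1 ≤ u ≤ k_{ω_1}, are greater than 2. For ω, u and a ∈ ℤ/2ℤ define η_{ω,u,a} ∈ 𝒫([-1,1]) by η_{ω,u,a}(E) = η_{ω,u}(E) if a = 0 and η_{ω,u,a}(E) = η_{ω,u}(-E) if a = 1, where η_{ω,u}(E) = η^{(ω)}(E + Π_ω(u)) / η^{(ω)}([Π_ω(u)-1, Π_ω(u)+1]). Define M'(ω,u,a) = (σω, σu, a) if r_{ω_1} > 0 and M'(ω,u,a) = (σω, σu, a+1) if r_{ω_1} < 0. Then for every ω, u, a: S_{-log|r_{ω_1}|} η_{ω,u,a} = η_{M'(ω,u,a)}. -/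

import Mathlib

open MeasureTheory Filter Topology

noncomputable section

/-- The left shift on sequences. -/
def shiftSeq {I : Type*} (ω : ℕ → I) : ℕ → I := fun n => ω (n + 1)

/-- The coding map `Π_ω(u) = Σ_{n} (Π_{j<n} r_{ω_j}) · t^{(ω_n)}_{u_n}` of a model. -/
def coding {I : Type*} (k : I → ℕ) (r : I → ℝ) (t : (i : I) → Fin (k i) → ℝ)
    (ω : ℕ → I) (u : (n : ℕ) → Fin (k (ω n))) : ℝ :=
  ∑' n : ℕ, (∏ j ∈ Finset.range n, r (ω j)) * t (ω n) (u n)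

/-- The set `Y^{(ω)}`, the image of the coding map. -/
def Yset {I : Type*} (k : I → ℕ) (r : I → ℝ) (t : (i : I) → Fin (k i) → ℝ)
    (ω : ℕ → I) : Set ℝ :=
  Set.range (coding k r t ω)

/-- The recentering of a measure `η` at `x`: `η_x(E) = η(E + x) / η([x-1,x+1])` for Borel
`E ⊆ [-1,1]` (realized as a measure on `ℝ` supported on `[-1,1]`). -/
def recenter (η : Measure ℝ) (x : ℝ) : Measure ℝ :=
  (η (Set.Icc (x - 1) (x + 1)))⁻¹ •
    (Measure.map (fun y => y - x) η).restrict (Set.Icc (-1 : ℝ) 1)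

/-- The scaling flow: `S_τ ν (E) = ν(e^{-τ}·E) / ν([-e^{-τ}, e^{-τ}])` for Borel
`E ⊆ [-1,1]` (realized as a measure on `ℝ` supported on `[-1,1]`). -/
def scaleM (τ : ℝ) (ν : Measure ℝ) : Measure ℝ :=
  (ν (Set.Icc (-(Real.exp (-τ))) (Real.exp (-τ))))⁻¹ •
    (Measure.map (fun y => Real.exp τ * y) ν).restrict (Set.Icc (-1 : ℝ) 1)

/-- The signed recentering `η_{ω,u,a}`: equal to `η_{ω,u}` if `a = 0`, and to its
reflection around the origin (`E ↦ η_{ω,u}(-E)`) if `a = 1`. -/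
def etaSigned {I : Type*} (k : I → ℕ) (r : I → ℝ) (t : (i : I) → Fin (k i) → ℝ)
    (η' : (ω : ℕ → I) → Measure ((n : ℕ) → Fin (k (ω n))))
    (ω : ℕ → I) (u : (n : ℕ) → Fin (k (ω n))) (a : ZMod 2) : Measure ℝ :=
  if a = 0 then
    recenter (Measure.map (coding k r t ω) (η' ω)) (coding k r t ω u)
  else
    Measure.map (fun x : ℝ => -x)
      (recenter (Measure.map (coding k r t ω) (η' ω)) (coding k r t ω u))

/-!
Splitting according to the first letter, the projected measure `η^{(ω)}` is self-similar:
`η^{(ω)} = ∑ᵢ p_{ω₀,i} · (fᵢ)_* η^{(σω)}` with `fᵢ x = r_{ω₀} x + t_{ω₀,i}`; as measures on the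
code space this is checked on prefix cylinders, which generate the product σ-algebra.
Because the pieces `fᵢ(Y^{(σω)})` are more than `2` apart, on the unit ball around
`Π_ω(u) = f_{u₀}(Π_{σω}(σu))` only the piece `i = u₀` is visible, so there `η^{(ω)}` is a constant
multiple of `(f_{u₀})_* η^{(σω)}`. The scaling flow `S_{-log |r|}` turns the unit window around
`Π_ω(u)` into the window of radius `|r|`, which `f_{u₀}` maps onto the unit window around
`Π_{σω}(σu)`, preserving or reversing orientation according to the sign of `r_{ω₀}`.
-/

open Metric
open scoped ENNReal

namespace MeasureTheory

section PrefixCylinders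

variable {X : ℕ → Type*}

def prefixCylinders (X : ℕ → Type*) : Set (Set (∀ n, X n)) :=
  {A | ∃ (n : ℕ) (c : ∀ n, X n), A = {v | ∀ j < n, v j = c j}}

theorem isPiSystem_prefixCylinders : IsPiSystem (prefixCylinders X) := by
  rintro _ ⟨n₁, c₁, rfl⟩ _ ⟨n₂, c₂, rfl⟩ ⟨v, hv₁, hv₂⟩
  refine ⟨max n₁ n₂, v, Set.ext fun w => ⟨fun ⟨hw₁, hw₂⟩ j hj => ?_, fun hw => ⟨?_, ?_⟩⟩⟩
  · rcases lt_max_iff.1 hj with hj | hj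
    · rw [hw₁ j hj, hv₁ j hj]
    · rw [hw₂ j hj, hv₂ j hj]
  · exact fun j hj => (hw j (lt_max_of_lt_left hj)).trans (hv₁ j hj)
  · exact fun j hj => (hw j (lt_max_of_lt_right hj)).trans (hv₂ j hj)

variable [∀ n, MeasurableSpace (X n)] [∀ n, MeasurableSingletonClass (X n)]

theorem measurableSet_prefixCylinder (n : ℕ) (c : ∀ n, X n) :
    MeasurableSet {v : ∀ n, X n | ∀ j < n, v j = c j} := by
  have : {v : ∀ n, X n | ∀ j < n, v j = c j} = ⋂ j ∈ Finset.range n, (fun v => v j) ⁻¹' {c j} := by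
    ext v; simp
  rw [this]
  exact .biInter (Finset.range n).countable_toSet
    fun j _ => measurable_pi_apply j (measurableSet_singleton (c j))

theorem generateFrom_prefixCylinders [∀ n, Countable (X n)] :
    MeasurableSpace.generateFrom (prefixCylinders X) = MeasurableSpace.pi := by
  refine le_antisymm (MeasurableSpace.generateFrom_le ?_) (iSup_le fun m => ?_)
  · rintro _ ⟨n, c, rfl⟩
    exact measurableSet_prefixCylinder n c
  refine (@measurable_to_countable (X m) _ _ _ (MeasurableSpace.generateFrom _)
    (fun x : ∀ n, X n => x m) fun v => ?_).comap_le
  let cyl : (∀ n, X n) → Set (∀ n, X n) := fun w => {x | ∀ j < m + 1, x j = w j}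
  have hfib : (fun x : ∀ n, X n => x m) ⁻¹' {v m} = ⋃₀ (cyl '' {w | w m = v m}) := by
    ext x
    refine ⟨fun hx => ⟨cyl x, ⟨x, hx, rfl⟩, fun j _ => rfl⟩, ?_⟩
    rintro ⟨_, ⟨w, hw, rfl⟩, hxw⟩
    exact (hxw m m.lt_succ_self).trans hw
  have hcount : (cyl '' {w | w m = v m}).Countable := by
    refine (Set.countable_range fun c : (∀ j : Fin (m + 1), X j) =>
      {x : ∀ n, X n | ∀ j : Fin (m + 1), x j = c j}).mono ?_
    rintro _ ⟨w, -, rfl⟩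
    exact ⟨fun j => w j, Set.ext fun x => ⟨fun hx j hj => hx ⟨j, hj⟩, fun hx j => hx j j.2⟩⟩
  rw [hfib]
  refine .sUnion hcount ?_
  rintro _ ⟨w, -, rfl⟩
  exact MeasurableSpace.measurableSet_generateFrom ⟨m + 1, w, rfl⟩

theorem Measure.ext_of_prefixCylinders [∀ n, Countable (X n)] {μ ν : Measure (∀ n, X n)}
    [IsFiniteMeasure μ]
    (h : ∀ n (c : ∀ n, X n), μ {v | ∀ j < n, v j = c j} = ν {v | ∀ j < n, v j = c j}) :
    μ = ν := by
  rcases isEmpty_or_nonempty (∀ n, X n) with hX | ⟨⟨c⟩⟩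
  · simp only [Measure.eq_zero_of_isEmpty]
  refine ext_of_generate_finite _ generateFrom_prefixCylinders.symm isPiSystem_prefixCylinders
    (fun _ ⟨n, c, hA⟩ => hA ▸ h n c) ?_
  simpa using h 0 c

end PrefixCylinders

end MeasureTheory

section Coding

def codeTail {I : Type*} {k : I → ℕ} {ω : ℕ → I} (v : (n : ℕ) → Fin (k (ω n))) :
    (n : ℕ) → Fin (k (shiftSeq ω n)) :=
  fun n => v (n + 1)

theorem measurable_codeTail {I : Type*} (k : I → ℕ) (ω : ℕ → I) :
    Measurable (codeTail (k := k) (ω := ω)) :=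
  measurable_pi_lambda _ fun n => measurable_pi_apply (n + 1)

variable {I : Type*} (k : I → ℕ) (r : I → ℝ) (t : (i : I) → Fin (k i) → ℝ)

def codingTerm (ω : ℕ → I) (v : (n : ℕ) → Fin (k (ω n))) (n : ℕ) : ℝ :=
  (∏ j ∈ Finset.range n, r (ω j)) * t (ω n) (v n)

theorem coding_eq_tsum (ω : ℕ → I) (v : (n : ℕ) → Fin (k (ω n))) :
    coding k r t ω v = ∑' n, codingTerm k r t ω v n :=
  rfl

variable [Finite I]

theorem exists_abs_codingTerm_le (hr : ∀ i, |r i| < 1) :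
    ∃ C c : ℝ, 0 ≤ c ∧ c < 1 ∧ ∀ ω v n, |codingTerm k r t ω v n| ≤ C * c ^ n := by
  have := Fintype.ofFinite I
  obtain ⟨C, hC⟩ := Finite.exists_le fun s : Σ i, Fin (k i) => |t s.1 s.2|
  set c : NNReal := Finset.univ.sup fun i => ‖r i‖₊
  have hrc (i : I) : |r i| ≤ c := by
    rw [← Real.norm_eq_abs, ← coe_nnnorm, NNReal.coe_le_coe]
    exact Finset.le_sup (f := fun i => ‖r i‖₊) (Finset.mem_univ i)
  have hc1 : c < 1 := (Finset.sup_lt_iff zero_lt_one).2 fun i _ => by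
    simpa [← NNReal.coe_lt_coe, Real.norm_eq_abs] using hr i
  refine ⟨C, c, c.2, hc1, fun ω v n => ?_⟩
  rw [codingTerm, abs_mul, Finset.abs_prod, mul_comm]
  refine mul_le_mul (hC ⟨ω n, v n⟩) ?_ (by positivity) ((abs_nonneg _).trans (hC ⟨ω n, v n⟩))
  exact (Finset.prod_le_prod (fun _ _ => abs_nonneg _) fun j _ => hrc (ω j)).trans_eq (by simp)

theorem summable_codingTerm (hr : ∀ i, |r i| < 1) (ω : ℕ → I) (v : (n : ℕ) → Fin (k (ω n))) :
    Summable (codingTerm k r t ω v) := by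
  obtain ⟨C, c, hc0, hc1, hC⟩ := exists_abs_codingTerm_le k r t hr
  exact ((summable_geometric_of_lt_one hc0 hc1).mul_left C).of_norm_bounded fun n => hC ω v n

theorem coding_eq_coding_shiftSeq (hr : ∀ i, |r i| < 1) (ω : ℕ → I)
    (v : (n : ℕ) → Fin (k (ω n))) :
    coding k r t ω v
      = r (ω 0) * coding k r t (shiftSeq ω) (codeTail v) + t (ω 0) (v 0) := by
  have hterm (n : ℕ) : codingTerm k r t ω v (n + 1)
      = r (ω 0) * codingTerm k r t (shiftSeq ω) (codeTail v) n := by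
    simp only [codingTerm, Finset.prod_range_succ', shiftSeq, codeTail]
    ring
  rw [coding_eq_tsum, (summable_codingTerm k r t hr ω v).tsum_eq_zero_add, tsum_congr hterm,
    tsum_mul_left, add_comm]
  congr 1
  simp [codingTerm]

theorem measurable_coding (hr : ∀ i, |r i| < 1) (ω : ℕ → I) : Measurable (coding k r t ω) := by
  refine measurable_of_tendsto_metrizable'
    (f := fun N v => ∑ n ∈ Finset.range N, codingTerm k r t ω v n) atTop
    (fun N => Finset.measurable_sum _ fun n _ => ?_)
    (tendsto_pi_nhds.2 fun v => (summable_codingTerm k r t hr ω v).hasSum.tendsto_sum_nat)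
  exact (measurable_of_countable fun x => (∏ j ∈ Finset.range n, r (ω j)) * t (ω n) x).comp
    (measurable_pi_apply n)

theorem exists_abs_coding_sub_le_one (hr : ∀ i, |r i| < 1) (ω : ℕ → I) :
    ∃ n, ∀ v w : (n : ℕ) → Fin (k (ω n)), (∀ j < n, v j = w j) →
      |coding k r t ω v - coding k r t ω w| ≤ 1 := by
  obtain ⟨C, c, hc0, hc1, hC⟩ := exists_abs_codingTerm_le k r t hr
  have hlim : Tendsto (fun n => 2 * C * c ^ n * (1 - c)⁻¹) atTop (𝓝 0) := by
    simpa using ((tendsto_pow_atTop_nhds_zero_of_lt_one hc0 hc1).const_mul (2 * C)).mul_const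
      (1 - c)⁻¹
  obtain ⟨n, hn⟩ := (hlim.eventually (ge_mem_nhds one_pos)).exists
  refine ⟨n, fun v w hvw => ?_⟩
  have htail : HasSum (fun m => codingTerm k r t ω v (m + n) - codingTerm k r t ω w (m + n))
      (coding k r t ω v - coding k r t ω w) := by
    have hsum := (summable_codingTerm k r t hr ω v).hasSum.sub
      (summable_codingTerm k r t hr ω w).hasSum
    have hhead : ∑ m ∈ Finset.range n, (codingTerm k r t ω v m - codingTerm k r t ω w m) = 0 :=
      Finset.sum_eq_zero fun m hm => by
        rw [codingTerm, codingTerm, hvw m (Finset.mem_range.1 hm), sub_self]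
    simpa [hhead, coding_eq_tsum] using (hasSum_nat_add_iff' n).2 hsum
  have hgeom : HasSum (fun m => 2 * C * c ^ n * c ^ m) (2 * C * c ^ n * (1 - c)⁻¹) :=
    (hasSum_geometric_of_lt_one hc0 hc1).mul_left _
  refine (htail.norm_le_of_bounded hgeom fun m => ?_).trans hn
  calc ‖codingTerm k r t ω v (m + n) - codingTerm k r t ω w (m + n)‖
      ≤ C * c ^ (m + n) + C * c ^ (m + n) := (norm_sub_le _ _).trans (add_le_add (hC ..) (hC ..))
    _ = 2 * C * c ^ n * c ^ m := by ring

end Coding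

section Zoom

def zoom (μ : Measure ℝ) (x s : ℝ) : Measure ℝ :=
  (μ (closedBall x s))⁻¹ • (μ.map fun y => s⁻¹ * (y - x)).restrict (closedBall 0 1)

theorem recenter_eq_zoom (μ : Measure ℝ) (x : ℝ) : recenter μ x = zoom μ x 1 := by
  simp [recenter, zoom, Real.closedBall_eq_Icc]

theorem inv_mul_sub_mem_closedBall_iff {x s y : ℝ} (hs : 0 < s) :
    s⁻¹ * (y - x) ∈ closedBall 0 1 ↔ y ∈ closedBall x s := by
  rw [mem_closedBall_zero_iff, mem_closedBall, Real.norm_eq_abs, Real.dist_eq, abs_mul,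
    abs_inv, abs_of_pos hs, inv_mul_le_iff₀ hs, mul_one]

theorem zoom_apply {μ : Measure ℝ} {x s : ℝ} {B : Set ℝ} (hB : MeasurableSet B) :
    zoom μ x s B = (μ (closedBall x s))⁻¹
      * μ ((fun y => s⁻¹ * (y - x)) ⁻¹' (B ∩ closedBall 0 1)) := by
  rw [zoom, Measure.smul_apply, smul_eq_mul, Measure.restrict_apply hB,
    Measure.map_apply (by fun_prop) (hB.inter measurableSet_closedBall)]

theorem zoom_smul (μ : Measure ℝ) (x s : ℝ) {c : ℝ≥0∞} (hc0 : c ≠ 0) (hc : c ≠ ∞) :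
    zoom (c • μ) x s = zoom μ x s := by
  rw [zoom, zoom, Measure.map_smul, Measure.restrict_smul, smul_smul, Measure.smul_apply,
    smul_eq_mul, ENNReal.mul_inv (.inl hc0) (.inl hc), mul_right_comm,
    ENNReal.inv_mul_cancel hc0 hc, one_mul]

theorem zoom_restrict (μ : Measure ℝ) {x s : ℝ} (hs : 0 < s) {K : Set ℝ} (hK : MeasurableSet K)
    (hsub : closedBall x s ⊆ K) : zoom (μ.restrict K) x s = zoom μ x s := by
  ext B hB
  rw [zoom_apply hB, zoom_apply hB, Measure.restrict_apply' hK, Measure.restrict_apply' hK,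
    Set.inter_eq_left.2 hsub, Set.inter_eq_left.2]
  exact fun y hy => hsub ((inv_mul_sub_mem_closedBall_iff hs).1 hy.2)

theorem scaleM_zoom {μ : Measure ℝ} {x s s' : ℝ} (hs : 0 < s) (hs1 : s ≤ 1) (hs' : 0 < s')
    (h0 : μ (closedBall x s') ≠ 0) (htop : μ (closedBall x s') ≠ ∞) :
    scaleM (-Real.log s) (zoom μ x s') = zoom μ x (s * s') := by
  have hexp : Real.exp (-(-Real.log s)) = s := by rw [neg_neg, Real.exp_log hs]
  have hexp' : Real.exp (-Real.log s) = s⁻¹ := by rw [Real.exp_neg, Real.exp_log hs]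
  have hss' : 0 < s * s' := mul_pos hs hs'
  have hnorm : closedBall (0 : ℝ) s ∩ closedBall 0 1 = closedBall 0 s :=
    Set.inter_eq_left.2 (closedBall_subset_closedBall hs1)
  have hball : (fun y => s'⁻¹ * (y - x)) ⁻¹' closedBall 0 s = closedBall x (s * s') := by
    ext y
    rw [Set.mem_preimage, ← inv_mul_sub_mem_closedBall_iff hss', ← inv_mul_sub_mem_closedBall_iff hs,
      sub_zero, ← mul_assoc, mul_inv_rev, mul_comm s'⁻¹]
  have hIcc (a : ℝ) : Set.Icc (-a) a = closedBall 0 a := by simp [Real.closedBall_eq_Icc]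
  ext B hB
  have hB' : MeasurableSet ((fun y => s⁻¹ * y) ⁻¹' (B ∩ Set.Icc (-1) 1)) :=
    measurable_const_mul _ (hB.inter measurableSet_Icc)
  have hpre : (fun y => s'⁻¹ * (y - x)) ⁻¹' ((fun y => s⁻¹ * y) ⁻¹' (B ∩ Set.Icc (-1) 1)
      ∩ closedBall 0 1) = (fun y => (s * s')⁻¹ * (y - x)) ⁻¹' (B ∩ closedBall 0 1) := by
    ext y
    simp only [Set.mem_preimage, Set.mem_inter_iff, hIcc, mul_inv, mul_assoc]
    generalize s'⁻¹ * (y - x) = z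
    have hz : s⁻¹ * z ∈ closedBall 0 1 → z ∈ closedBall 0 1 := fun h =>
      closedBall_subset_closedBall hs1
        ((inv_mul_sub_mem_closedBall_iff (x := 0) hs).1 (by rwa [sub_zero]))
    tauto
  rw [scaleM, hexp, hexp', Measure.smul_apply, smul_eq_mul, Measure.restrict_apply hB,
    Measure.map_apply (measurable_const_mul _) (hB.inter measurableSet_Icc), zoom_apply hB',
    hIcc, zoom_apply measurableSet_closedBall, hnorm, hball, hpre,
    ENNReal.mul_inv (.inl (ENNReal.inv_ne_zero.2 htop)) (.inl (ENNReal.inv_ne_top.2 h0)),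
    mul_mul_mul_comm, ENNReal.inv_mul_cancel (ENNReal.inv_ne_zero.2 htop)
    (ENNReal.inv_ne_top.2 h0), one_mul, zoom_apply hB]

theorem zoom_map_affine (ν : Measure ℝ) {ρ : ℝ} (hρ : ρ ≠ 0) (b y s : ℝ) :
    zoom (ν.map fun w => ρ * w + b) (ρ * y + b) (|ρ| * s)
      = (zoom ν y s).map fun z => (SignType.sign ρ : ℝ) * z := by
  have hf : Measurable fun w : ℝ => ρ * w + b := by fun_prop
  have hρ' : 0 < |ρ| := abs_pos.2 hρ
  have hsign : |(SignType.sign ρ : ℝ)| = 1 := by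
    rcases hρ.lt_or_gt with h | h <;> simp [sign_neg, sign_pos, h]
  have hkey (w : ℝ) : (|ρ| * s)⁻¹ * (ρ * w + b - (ρ * y + b))
      = SignType.sign ρ * (s⁻¹ * (w - y)) := by
    have hsr : |ρ|⁻¹ * ρ = SignType.sign ρ := by
      rcases hρ.lt_or_gt with h | h <;> simp [sign_neg, sign_pos, h, abs_of_neg, abs_of_pos, hρ]
    rw [mul_inv, ← hsr]
    ring
  have hball : (fun w => ρ * w + b) ⁻¹' closedBall (ρ * y + b) (|ρ| * s) = closedBall y s := by
    ext w
    rw [Set.mem_preimage, mem_closedBall, mem_closedBall, Real.dist_eq, Real.dist_eq,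
      show ρ * w + b - (ρ * y + b) = ρ * (w - y) by ring, abs_mul, mul_le_mul_iff_right₀ hρ']
  ext B hB
  have hB' : MeasurableSet ((fun z => (SignType.sign ρ : ℝ) * z) ⁻¹' B) :=
    measurable_const_mul _ hB
  rw [zoom_apply hB, Measure.map_apply hf measurableSet_closedBall, hball,
    Measure.map_apply hf ((hB.inter measurableSet_closedBall).preimage (by fun_prop)),
    Measure.map_apply (measurable_const_mul _) hB, zoom_apply hB']
  congr 2
  ext w
  simp only [Set.mem_preimage, Set.mem_inter_iff, hkey, mem_closedBall_zero_iff,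
    Real.norm_eq_abs, abs_mul, hsign, one_mul]

theorem scaleM_map_neg (τ : ℝ) (ν : Measure ℝ) :
    scaleM τ (ν.map fun x => -x) = (scaleM τ ν).map fun x => -x := by
  have hneg : ∀ a : ℝ, (fun x : ℝ => -x) ⁻¹' Set.Icc (-a) a = Set.Icc (-a) a := fun a => by
    ext; simp [and_comm]
  rw [scaleM, scaleM, Measure.map_apply measurable_neg measurableSet_Icc, hneg, Measure.map_smul]
  congr 1
  conv_rhs => rw [← hneg 1, ← Measure.restrict_map measurable_neg measurableSet_Icc]
  rw [Measure.map_map (by fun_prop) measurable_neg, Measure.map_map measurable_neg (by fun_prop)]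
  congr 2
  ext x
  simp

theorem map_neg_map_neg (ν : Measure ℝ) : (ν.map fun x => -x).map (fun x => -x) = ν := by
  rw [Measure.map_map measurable_neg measurable_neg]
  simp

end Zoom

section Model

variable {I : Type*} (k : I → ℕ) (r : I → ℝ) (t : (i : I) → Fin (k i) → ℝ)
  (p : (i : I) → Fin (k i) → ℝ) (η' : (ω : ℕ → I) → Measure ((n : ℕ) → Fin (k (ω n))))

def IsBernoulliProduct : Prop :=
  ∀ (ω : ℕ → I) (n : ℕ) (c : (j : ℕ) → Fin (k (ω j))),
    η' ω {u | ∀ j < n, u j = c j} = ∏ j ∈ Finset.range n, ENNReal.ofReal (p (ω j) (c j))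

def PiecesSeparated (d : ℝ) : Prop :=
  ∀ ω : ℕ → I, ∀ u v : Fin (k (ω 0)), u ≠ v →
    ∀ x ∈ (fun x => r (ω 0) * x + t (ω 0) u) '' Yset k r t (shiftSeq ω),
    ∀ y ∈ (fun x => r (ω 0) * x + t (ω 0) v) '' Yset k r t (shiftSeq ω), d < |x - y|

theorem map_codeTail_restrict_eq (hη'prob : ∀ ω, IsProbabilityMeasure (η' ω))
    (hη'cyl : IsBernoulliProduct k p η')
    (ω : ℕ → I) (i : Fin (k (ω 0))) :
    ((η' ω).restrict {v | v 0 = i}).map codeTail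
      = ENNReal.ofReal (p (ω 0) i) • η' (shiftSeq ω) := by
  have := hη'prob ω
  have hi : MeasurableSet {v : (n : ℕ) → Fin (k (ω n)) | v 0 = i} :=
    measurableSet_eq_fun (measurable_pi_apply 0) measurable_const
  refine Measure.ext_of_prefixCylinders fun n c => ?_
  have hcyl : codeTail ⁻¹' {w | ∀ j < n, w j = c j} ∩ {v | v 0 = i}
      = {v | ∀ j < n + 1, v j = Nat.casesOn (motive := fun j => Fin (k (ω j))) j i c} := by
    ext v
    simp only [Set.mem_inter_iff, Set.mem_preimage, Set.mem_ofPred_eq, codeTail,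
      Nat.forall_lt_succ_left']
    exact and_comm
  rw [Measure.map_apply (measurable_codeTail k ω) (measurableSet_prefixCylinder n c),
    Measure.restrict_apply' hi, hcyl,
    hη'cyl, Finset.prod_range_succ', Measure.smul_apply, smul_eq_mul, hη'cyl, mul_comm]
  rfl

theorem etaSigned_zero (ω : ℕ → I) (u : (n : ℕ) → Fin (k (ω n))) :
    etaSigned k r t η' ω u 0 = recenter ((η' ω).map (coding k r t ω)) (coding k r t ω u) :=
  if_pos rfl

theorem etaSigned_one (ω : ℕ → I) (u : (n : ℕ) → Fin (k (ω n))) :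
    etaSigned k r t η' ω u 1
      = (recenter ((η' ω).map (coding k r t ω)) (coding k r t ω u)).map fun x => -x :=
  if_neg one_ne_zero

variable [Finite I]

theorem map_coding_restrict_eq (hr : ∀ i, |r i| < 1) (hη'prob : ∀ ω, IsProbabilityMeasure (η' ω))
    (hη'cyl : IsBernoulliProduct k p η')
    (ω : ℕ → I) (i : Fin (k (ω 0))) :
    ((η' ω).restrict {v | v 0 = i}).map (coding k r t ω)
      = ENNReal.ofReal (p (ω 0) i) •
          (((η' (shiftSeq ω)).map (coding k r t (shiftSeq ω))).map
            fun x => r (ω 0) * x + t (ω 0) i) := by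
  have hi : MeasurableSet {v : (n : ℕ) → Fin (k (ω n)) | v 0 = i} :=
    measurableSet_eq_fun (measurable_pi_apply 0) measurable_const
  have hcoding : coding k r t ω =ᵐ[(η' ω).restrict {v | v 0 = i}]
      (fun x => r (ω 0) * x + t (ω 0) i) ∘ coding k r t (shiftSeq ω) ∘ codeTail := by
    filter_upwards [ae_restrict_mem hi] with v hv
    rw [coding_eq_coding_shiftSeq k r t hr, show v 0 = i from hv]
    rfl
  rw [Measure.map_congr hcoding, ← Measure.map_map (by fun_prop)
    ((measurable_coding k r t hr _).comp (measurable_codeTail k ω)),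
    ← Measure.map_map (measurable_coding k r t hr _) (measurable_codeTail k ω),
    map_codeTail_restrict_eq k p η' hη'prob hη'cyl, Measure.map_smul, Measure.map_smul]

theorem map_coding_eq_sum (hr : ∀ i, |r i| < 1) (hη'prob : ∀ ω, IsProbabilityMeasure (η' ω))
    (hη'cyl : IsBernoulliProduct k p η')
    (ω : ℕ → I) :
    (η' ω).map (coding k r t ω)
      = ∑ i, ENNReal.ofReal (p (ω 0) i) •
          (((η' (shiftSeq ω)).map (coding k r t (shiftSeq ω))).map
            fun x => r (ω 0) * x + t (ω 0) i) := by
  have hpart : η' ω = Measure.sum fun i => (η' ω).restrict {v | v 0 = i} := by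
    rw [← Measure.restrict_iUnion (fun i j hij => Set.disjoint_left.2 fun v hi hj => hij (hi ▸ hj))
      fun i => measurableSet_eq_fun (measurable_pi_apply 0) measurable_const,
      Set.iUnion_eq_univ_iff.2 fun v => ⟨v 0, rfl⟩, Measure.restrict_univ]
  conv_lhs => rw [hpart]
  rw [Measure.map_sum (measurable_coding k r t hr ω).aemeasurable, Measure.sum_fintype]
  exact Finset.sum_congr rfl fun i _ => map_coding_restrict_eq k r t p η' hr hη'prob hη'cyl ω i

theorem restrict_map_coding_closedBall (hr : ∀ i, |r i| < 1)
    (hη'prob : ∀ ω, IsProbabilityMeasure (η' ω))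
    (hη'cyl : IsBernoulliProduct k p η')
    {d : ℝ} (hsep : PiecesSeparated k r t d)
    (ω : ℕ → I) (u : (n : ℕ) → Fin (k (ω n))) :
    ((η' ω).map (coding k r t ω)).restrict (closedBall (coding k r t ω u) d)
      = (ENNReal.ofReal (p (ω 0) (u 0)) •
          (((η' (shiftSeq ω)).map (coding k r t (shiftSeq ω))).map
            fun x => r (ω 0) * x + t (ω 0) (u 0))).restrict (closedBall (coding k r t ω u) d) := by
  set x₀ := coding k r t ω u
  have hx₀ : x₀ ∈ (fun x => r (ω 0) * x + t (ω 0) (u 0)) '' Yset k r t (shiftSeq ω) :=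
    ⟨_, ⟨codeTail u, rfl⟩, (coding_eq_coding_shiftSeq k r t hr ω u).symm⟩
  have hfar (i : Fin (k (ω 0))) (hi : i ≠ u 0) :
      (((η' (shiftSeq ω)).map (coding k r t (shiftSeq ω))).map
        fun x => r (ω 0) * x + t (ω 0) i) (closedBall x₀ d) = 0 := by
    rw [Measure.map_apply (by fun_prop) measurableSet_closedBall,
      Measure.map_apply (measurable_coding k r t hr _)
        (measurableSet_closedBall.preimage (by fun_prop)),
      ← measure_empty (μ := η' (shiftSeq ω))]
    congr 1
    refine Set.eq_empty_of_forall_notMem fun w hw => ?_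
    have := hsep ω i (u 0) hi _ ⟨_, ⟨w, rfl⟩, rfl⟩ x₀ hx₀
    rw [Set.mem_preimage, Set.mem_preimage, mem_closedBall, Real.dist_eq] at hw
    linarith
  ext B hB
  rw [Measure.restrict_apply hB, Measure.restrict_apply hB,
    map_coding_eq_sum k r t p η' hr hη'prob hη'cyl, Measure.coe_finsetSum, Finset.sum_apply,
    Finset.sum_eq_single (u 0) (fun i _ hi => ?_) (by simp)]
  rw [Measure.smul_apply, measure_mono_null Set.inter_subset_right (hfar i hi), smul_zero]

theorem map_coding_closedBall_ne_zero (hr : ∀ i, |r i| < 1) (hp : ∀ i j, 0 < p i j)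
    (hη'cyl : IsBernoulliProduct k p η')
    (ω : ℕ → I) (u : (n : ℕ) → Fin (k (ω n))) :
    (η' ω).map (coding k r t ω) (closedBall (coding k r t ω u) 1) ≠ 0 := by
  obtain ⟨n, hn⟩ := exists_abs_coding_sub_le_one k r t hr ω
  have hsub : {v | ∀ j < n, v j = u j} ⊆ coding k r t ω ⁻¹' closedBall (coding k r t ω u) 1 :=
    fun v hv => by simpa [Real.dist_eq] using hn v u hv
  rw [Measure.map_apply (measurable_coding k r t hr ω) measurableSet_closedBall]
  refine fun h => ?_
  have := measure_mono_null hsub h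
  rw [hη'cyl, Finset.prod_eq_zero_iff] at this
  obtain ⟨j, -, hj⟩ := this
  exact (ENNReal.ofReal_pos.2 (hp _ _)).ne' hj

theorem scaleM_recenter_map_coding (hr : ∀ i, |r i| < 1) (hr0 : ∀ i, r i ≠ 0)
    (hp : ∀ i j, 0 < p i j) (hη'prob : ∀ ω, IsProbabilityMeasure (η' ω))
    (hη'cyl : IsBernoulliProduct k p η')
    (hsep : PiecesSeparated k r t 2)
    (ω : ℕ → I) (u : (n : ℕ) → Fin (k (ω n))) :
    scaleM (-Real.log |r (ω 0)|) (recenter ((η' ω).map (coding k r t ω)) (coding k r t ω u))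
      = (recenter ((η' (shiftSeq ω)).map (coding k r t (shiftSeq ω)))
          (coding k r t (shiftSeq ω) (codeTail u))).map
            fun x => (SignType.sign (r (ω 0)) : ℝ) * x := by
  have := hη'prob ω
  set μ := (η' ω).map (coding k r t ω)
  set x₀ := coding k r t ω u
  have hρ : 0 < |r (ω 0)| := abs_pos.2 (hr0 _)
  have hball : closedBall x₀ |r (ω 0)| ⊆ closedBall x₀ 2 :=
    closedBall_subset_closedBall (by linarith [hr (ω 0)])
  calc scaleM (-Real.log |r (ω 0)|) (recenter μ x₀)
      = zoom μ x₀ |r (ω 0)| := by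
        rw [recenter_eq_zoom, scaleM_zoom hρ (hr _).le one_pos
          (map_coding_closedBall_ne_zero k r t p η' hr hp hη'cyl ω u) (measure_ne_top _ _), mul_one]
    _ = zoom (μ.restrict (closedBall x₀ 2)) x₀ |r (ω 0)| :=
        (zoom_restrict _ hρ measurableSet_closedBall hball).symm
    _ = zoom (((η' (shiftSeq ω)).map (coding k r t (shiftSeq ω))).map
          fun x => r (ω 0) * x + t (ω 0) (u 0)) x₀ (|r (ω 0)| * 1) := by
        rw [restrict_map_coding_closedBall k r t p η' hr hη'prob hη'cyl hsep,
          zoom_restrict _ hρ measurableSet_closedBall hball,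
          zoom_smul _ _ _ (ENNReal.ofReal_pos.2 (hp _ _)).ne' ENNReal.ofReal_ne_top, mul_one]
    _ = _ := by
        rw [show x₀ = _ from coding_eq_coding_shiftSeq k r t hr ω u, zoom_map_affine _ (hr0 _),
          recenter_eq_zoom]

end Model

theorem stmt10_general
    (I : Type) [Fintype I]
    (k : I → ℕ)
    (r : I → ℝ) (hr : ∀ i, |r i| < 1) (hr0 : ∀ i, r i ≠ 0)
    (t : (i : I) → Fin (k i) → ℝ)
    (p : (i : I) → Fin (k i) → ℝ) (hp : ∀ i j, 0 < p i j)
    (η' : (ω : ℕ → I) → Measure ((n : ℕ) → Fin (k (ω n))))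
    (hη'prob : ∀ ω, IsProbabilityMeasure (η' ω))
    (hη'cyl : ∀ (ω : ℕ → I) (n : ℕ) (c : (j : ℕ) → Fin (k (ω j))),
      η' ω {u | ∀ j < n, u j = c j} = ∏ j ∈ Finset.range n, ENNReal.ofReal (p (ω j) (c j)))
    (hsep : ∀ ω : ℕ → I, ∀ u v : Fin (k (ω 0)), u ≠ v →
      ∀ x ∈ (fun x => r (ω 0) * x + t (ω 0) u) '' Yset k r t (shiftSeq ω),
      ∀ y ∈ (fun x => r (ω 0) * x + t (ω 0) v) '' Yset k r t (shiftSeq ω),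
        2 < |x - y|)
    (ω : ℕ → I) (u : (n : ℕ) → Fin (k (ω n))) (a : ZMod 2) :
    scaleM (-Real.log |r (ω 0)|) (etaSigned k r t η' ω u a)
      = etaSigned k r t η' (shiftSeq ω) (fun n => u (n + 1))
          (if 0 < r (ω 0) then a else a + 1) := by
  have key := scaleM_recenter_map_coding k r t p η' hr hr0 hp hη'prob hη'cyl hsep ω u
  obtain rfl | rfl : a = 0 ∨ a = 1 := by revert a; decide
  all_goals
    rcases (hr0 (ω 0)).lt_or_gt with hρ | hρ
    · rw [sign_neg hρ, SignType.coe_neg_one] at key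
      simp only [if_neg hρ.not_gt, etaSigned_zero, etaSigned_one, zero_add, one_add_one_eq_two,
        (by decide : (2 : ZMod 2) = 0), scaleM_map_neg, key, neg_one_mul, map_neg_map_neg]
      rfl
    · rw [sign_pos hρ, SignType.coe_one] at key
      simp only [if_pos hρ, etaSigned_zero, etaSigned_one, scaleM_map_neg, key, one_mul,
        Measure.map_id']
      rfl

/-- in a model (with possibly orientation-reversing maps) with strong
separation in which the pieces `f^{(ω_1)}_u(Y^{(σω)})` are at distance `> 2` from each
other, for every `ω`, `u` and `a ∈ ℤ/2ℤ` one has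
`S_{-log |r_{ω_1}|} η_{ω,u,a} = η_{M'(ω,u,a)}`, where `M'(ω,u,a) = (σω, σu, a)` if
`r_{ω_1} > 0` and `M'(ω,u,a) = (σω, σu, a+1)` if `r_{ω_1} < 0`. -/
theorem stmt10
    (I : Type) [Fintype I] [Nonempty I] [MeasurableSpace I] [MeasurableSingletonClass I]
    (k : I → ℕ) (hk : ∀ i, 0 < k i)
    (r : I → ℝ) (hr : ∀ i, |r i| < 1) (hr0 : ∀ i, r i ≠ 0)
    (t : (i : I) → Fin (k i) → ℝ)
    (p : (i : I) → Fin (k i) → ℝ) (hp : ∀ i j, 0 < p i j) (hpsum : ∀ i, ∑ j, p i j = 1)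
    (P : Measure (ℕ → I)) (hP : IsProbabilityMeasure P)
    (hPinv : Measure.map (shiftSeq (I := I)) P = P)
    (η' : (ω : ℕ → I) → Measure ((n : ℕ) → Fin (k (ω n))))
    (hη'prob : ∀ ω, IsProbabilityMeasure (η' ω))
    (hη'cyl : ∀ (ω : ℕ → I) (n : ℕ) (c : (j : ℕ) → Fin (k (ω j))),
      η' ω {u | ∀ j < n, u j = c j} = ∏ j ∈ Finset.range n, ENNReal.ofReal (p (ω j) (c j)))
    (hSSC : ∀ ω : ℕ → I, ∀ u v : Fin (k (ω 0)), u ≠ v →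
      Disjoint ((fun x => r (ω 0) * x + t (ω 0) u) '' Yset k r t (shiftSeq ω))
               ((fun x => r (ω 0) * x + t (ω 0) v) '' Yset k r t (shiftSeq ω)))
    (hsep : ∀ ω : ℕ → I, ∀ u v : Fin (k (ω 0)), u ≠ v →
      ∀ x ∈ (fun x => r (ω 0) * x + t (ω 0) u) '' Yset k r t (shiftSeq ω),
      ∀ y ∈ (fun x => r (ω 0) * x + t (ω 0) v) '' Yset k r t (shiftSeq ω),
        2 < |x - y|)
    (ω : ℕ → I) (u : (n : ℕ) → Fin (k (ω n))) (a : ZMod 2) :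
    scaleM (-Real.log |r (ω 0)|) (etaSigned k r t η' ω u a)
      = etaSigned k r t η' (shiftSeq ω) (fun n => u (n + 1))
          (if 0 < r (ω 0) then a else a + 1) :=
  stmt10_general I k r hr hr0 t p hp η' hη'prob hη'cyl hsep ω u a
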